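/- Let S be a nonempty finite family of open axis-parallel unit squares in ℝ² that is δ-robust for some δ > 0, and suppose S can be stabbed by k axis-parallel lines. Let τ, σ ≥ 0 with τ + σ < δ, and for each square □_1(x_s, y_s) ∈ S choose reals t_s, t'_s with |t_s| ≤ τ and |t'_s| ≤ τ. Then the modified family {□_{1−2σ}(x_s + t_s + σ, y_s + t'_s + σ) : s ∈ S}, obtained by translating each square by at most τ in each coordinate and shrinking it by σ from each side, can also be stabbed by k axis-parallel lines. -/

import Mathlib

/-!
A line stabbing a subfamily of a `δ`-robust family meets the common part of the
corresponding projections, an interval of length at least `2δ`. Its midpoint lies at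
distance at least `δ` from every endpoint, so the parallel line through it still meets
every square of the subfamily after a translation by at most `τ` and a shrinking by `σ`,
as long as `τ + σ < δ`. Replacing each stabbing line in this way keeps their number.
-/

/-- The vertical line `x = c`. -/
def vLine (c : ℝ) : Set (ℝ × ℝ) := {p : ℝ × ℝ | p.1 = c}

/-- The horizontal line `y = c`. -/
def hLine (c : ℝ) : Set (ℝ × ℝ) := {p : ℝ × ℝ | p.2 = c}

/-- An axis-parallel line is a vertical or a horizontal line. -/
def IsAPLine (L : Set (ℝ × ℝ)) : Prop := (∃ c, L = vLine c) ∨ (∃ c, L = hLine c)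

/-- The open axis-parallel square `□_l(x, y) = (x, x+l) × (y, y+l)`. -/
def openSquare (l x y : ℝ) : Set (ℝ × ℝ) := Set.Ioo x (x + l) ×ˢ Set.Ioo y (y + l)

/-- A finite family of open axis-parallel squares of side `l`, given by the finset `S`
of their lower-left corners, is `δ`-robust if for every nonempty subfamily and each
coordinate, a nonempty intersection of the projections has diameter at least `2δ`. -/
def IsRobust (δ l : ℝ) (S : Finset (ℝ × ℝ)) : Prop :=
  ∀ R ⊆ S, R.Nonempty →
    ((⋂ r ∈ (R : Set (ℝ × ℝ)), Set.Ioo r.1 (r.1 + l)).Nonempty →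
      2 * δ ≤ Metric.diam (⋂ r ∈ (R : Set (ℝ × ℝ)), Set.Ioo r.1 (r.1 + l))) ∧
    ((⋂ r ∈ (R : Set (ℝ × ℝ)), Set.Ioo r.2 (r.2 + l)).Nonempty →
      2 * δ ≤ Metric.diam (⋂ r ∈ (R : Set (ℝ × ℝ)), Set.Ioo r.2 (r.2 + l)))

open Set Metric

theorem biInter_finset_Ioo_eq_Ioo_sup'_inf' {ι : Type*} {R : Finset ι} (hR : R.Nonempty)
    (a b : ι → ℝ) :
    ⋂ i ∈ (R : Set ι), Ioo (a i) (b i) = Ioo (R.sup' hR a) (R.inf' hR b) := by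
  ext x
  simp [Finset.sup'_lt_iff, Finset.lt_inf'_iff, forall_and]

theorem exists_forall_add_le_le_sub_of_two_mul_le_diam_biInter_Ioo {ι : Type*}
    {R : Finset ι} (hR : R.Nonempty) {a b : ι → ℝ} {c δ : ℝ}
    (hc : ∀ i ∈ R, c ∈ Ioo (a i) (b i))
    (hdiam : 2 * δ ≤ diam (⋂ i ∈ (R : Set ι), Ioo (a i) (b i))) :
    ∃ c', ∀ i ∈ R, a i + δ ≤ c' ∧ c' ≤ b i - δ := by
  rw [biInter_finset_Ioo_eq_Ioo_sup'_inf' hR] at hdiam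
  obtain ⟨i₀, hi₀⟩ := hR
  have hle : R.sup' ⟨i₀, hi₀⟩ a ≤ R.inf' ⟨i₀, hi₀⟩ b :=
    (Finset.sup'_le _ _ fun i hi => (hc i hi).1.le).trans
      (Finset.le_inf' _ _ fun i hi => (hc i hi).2.le)
  rw [Real.diam_Ioo hle] at hdiam
  refine ⟨(R.sup' ⟨i₀, hi₀⟩ a + R.inf' ⟨i₀, hi₀⟩ b) / 2, fun i hi => ?_⟩
  have := Finset.le_sup' a hi
  have := Finset.inf'_le b hi
  constructor <;> linarith

theorem IsRobust.exists_forall_add_le_le_sub_fst {δ w : ℝ} {S R : Finset (ℝ × ℝ)}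
    (hrob : IsRobust δ w S) (hRS : R ⊆ S) {c : ℝ} (hc : ∀ r ∈ R, c ∈ Ioo r.1 (r.1 + w)) :
    ∃ c', ∀ r ∈ R, r.1 + δ ≤ c' ∧ c' ≤ r.1 + w - δ := by
  rcases R.eq_empty_or_nonempty with rfl | hR
  · exact ⟨0, by simp⟩
  refine exists_forall_add_le_le_sub_of_two_mul_le_diam_biInter_Ioo hR hc ?_
  exact (hrob R hRS hR).1 ⟨c, mem_iInter₂.2 hc⟩

theorem IsRobust.exists_forall_add_le_le_sub_snd {δ w : ℝ} {S R : Finset (ℝ × ℝ)}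
    (hrob : IsRobust δ w S) (hRS : R ⊆ S) {c : ℝ} (hc : ∀ r ∈ R, c ∈ Ioo r.2 (r.2 + w)) :
    ∃ c', ∀ r ∈ R, r.2 + δ ≤ c' ∧ c' ≤ r.2 + w - δ := by
  rcases R.eq_empty_or_nonempty with rfl | hR
  · exact ⟨0, by simp⟩
  refine exists_forall_add_le_le_sub_of_two_mul_le_diam_biInter_Ioo hR hc ?_
  exact (hrob R hRS hR).2 ⟨c, mem_iInter₂.2 hc⟩

theorem mem_Ioo_add_add_of_add_le_le_sub {a w c u δ τ σ : ℝ} (hc : a + δ ≤ c ∧ c ≤ a + w - δ)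
    (hu : |u| ≤ τ) (hts : τ + σ < δ) :
    c ∈ Ioo (a + u + σ) (a + u + σ + (w - 2 * σ)) := by
  obtain ⟨hu₁, hu₂⟩ := abs_le.1 hu
  constructor <;> linarith [hc.1, hc.2]

theorem vLine_inter_openSquare_nonempty_iff {c w x y : ℝ} :
    (vLine c ∩ openSquare w x y).Nonempty ↔ c ∈ Ioo x (x + w) := by
  constructor
  · rintro ⟨p, rfl, hp, -⟩
    exact hp
  · intro hc
    exact ⟨(c, y + w / 2), rfl, hc, by constructor <;> linarith [hc.1, hc.2]⟩

theorem hLine_inter_openSquare_nonempty_iff {c w x y : ℝ} :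
    (hLine c ∩ openSquare w x y).Nonempty ↔ c ∈ Ioo y (y + w) := by
  constructor
  · rintro ⟨p, rfl, -, hp⟩
    exact hp
  · intro hc
    exact ⟨(x + w / 2, c), rfl, by constructor <;> linarith [hc.1, hc.2], hc⟩

theorem IsRobust.exists_apLine_stabbing_perturbed {δ w τ σ : ℝ} {S : Finset (ℝ × ℝ)}
    (hrob : IsRobust δ w S) (hts : τ + σ < δ) {t t' : ℝ × ℝ → ℝ}
    (ht : ∀ s ∈ S, |t s| ≤ τ) (ht' : ∀ s ∈ S, |t' s| ≤ τ) {l : Set (ℝ × ℝ)}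
    (hl : IsAPLine l) :
    ∃ l', IsAPLine l' ∧ ∀ s ∈ S, (l ∩ openSquare w s.1 s.2).Nonempty →
      (l' ∩ openSquare (w - 2 * σ) (s.1 + t s + σ) (s.2 + t' s + σ)).Nonempty := by
  classical
  rcases hl with ⟨c, rfl⟩ | ⟨c, rfl⟩
  · obtain ⟨c', hc'⟩ := hrob.exists_forall_add_le_le_sub_fst
      (R := S.filter fun s => c ∈ Ioo s.1 (s.1 + w)) (S.filter_subset _)
      fun r hr => (Finset.mem_filter.1 hr).2
    refine ⟨vLine c', Or.inl ⟨c', rfl⟩, fun s hs hst => ?_⟩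
    rw [vLine_inter_openSquare_nonempty_iff] at hst ⊢
    exact mem_Ioo_add_add_of_add_le_le_sub
      (hc' s (Finset.mem_filter.2 ⟨hs, hst⟩)) (ht s hs) hts
  · obtain ⟨c', hc'⟩ := hrob.exists_forall_add_le_le_sub_snd
      (R := S.filter fun s => c ∈ Ioo s.2 (s.2 + w)) (S.filter_subset _)
      fun r hr => (Finset.mem_filter.1 hr).2
    refine ⟨hLine c', Or.inr ⟨c', rfl⟩, fun s hs hst => ?_⟩
    rw [hLine_inter_openSquare_nonempty_iff] at hst ⊢
    exact mem_Ioo_add_add_of_add_le_le_sub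
      (hc' s (Finset.mem_filter.2 ⟨hs, hst⟩)) (ht' s hs) hts

theorem robust_stab_preserved_general (δ : ℝ)
    (S : Finset (ℝ × ℝ)) (hrob : IsRobust δ 1 S)
    (k : ℕ) (L : Finset (Set (ℝ × ℝ))) (hL : ∀ l ∈ L, IsAPLine l) (hLcard : L.card ≤ k)
    (hstab : ∀ s ∈ S, ∃ l ∈ L, (l ∩ openSquare 1 s.1 s.2).Nonempty)
    (τ σ : ℝ) (hts : τ + σ < δ)
    (t t' : ℝ × ℝ → ℝ) (ht : ∀ s ∈ S, |t s| ≤ τ) (ht' : ∀ s ∈ S, |t' s| ≤ τ) :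
    ∃ L' : Finset (Set (ℝ × ℝ)), L'.card ≤ k ∧ (∀ l ∈ L', IsAPLine l) ∧
      ∀ s ∈ S, ∃ l ∈ L',
        (l ∩ openSquare (1 - 2 * σ) (s.1 + t s + σ) (s.2 + t' s + σ)).Nonempty := by
  classical
  choose! g hgL hgstab using fun l (hl : l ∈ L) =>
    hrob.exists_apLine_stabbing_perturbed hts ht ht' (hL l hl)
  refine ⟨L.image g, Finset.card_image_le.trans hLcard, ?_, fun s hs => ?_⟩
  · simpa using hgL
  · obtain ⟨l, hl, hls⟩ := hstab s hs
    exact ⟨g l, Finset.mem_image_of_mem g hl, hgstab l hl s hs hls⟩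

/-- A `δ`-robust family of unit squares stabbable by `k` axis-parallel lines remains
stabbable by `k` axis-parallel lines after translating each square by at most `τ` in
each coordinate and shrinking it by `σ` from each side, provided `τ + σ < δ`. -/
theorem robust_stab_preserved (δ : ℝ) (hδ : 0 < δ)
    (S : Finset (ℝ × ℝ)) (hS : S.Nonempty) (hrob : IsRobust δ 1 S)
    (k : ℕ) (L : Finset (Set (ℝ × ℝ))) (hL : ∀ l ∈ L, IsAPLine l) (hLcard : L.card ≤ k)
    (hstab : ∀ s ∈ S, ∃ l ∈ L, (l ∩ openSquare 1 s.1 s.2).Nonempty)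
    (τ σ : ℝ) (hτ : 0 ≤ τ) (hσ : 0 ≤ σ) (hts : τ + σ < δ)
    (t t' : ℝ × ℝ → ℝ) (ht : ∀ s ∈ S, |t s| ≤ τ) (ht' : ∀ s ∈ S, |t' s| ≤ τ) :
    ∃ L' : Finset (Set (ℝ × ℝ)), L'.card ≤ k ∧ (∀ l ∈ L', IsAPLine l) ∧
      ∀ s ∈ S, ∃ l ∈ L',
        (l ∩ openSquare (1 - 2 * σ) (s.1 + t s + σ) (s.2 + t' s + σ)).Nonempty :=
  robust_stab_preserved_general δ S hrob k L hL hLcard hstab τ σ hts t t' ht ht'
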